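/- (Completeness of the GRI for interval-decomposable modules) Let P be a poset and I a collection of intervals of P such that every principal ideal of (I, ⊇) is finite. If M and N are both I-decomposable persistence modules (every indecomposable summand an interval module supported on a member of I) and rk_M(I') = rk_N(I') for all I' ∈ I, then M ≅ N. -/

import Mathlib

open scoped Classical

variable (k : Type) (P : Type) [Field k] [PartialOrder P]

/-- A pointwise (not necessarily finite-dimensional) persistence module over the poset `P`. -/
structure PersMod where
  V : P → Type
  [acg : ∀ p, AddCommGroup (V p)]
  [mod : ∀ p, Module k (V p)]
  φ : ∀ p q : P, p ≤ q → (V p →ₗ[k] V q)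
  φ_self : ∀ p : P, φ p p le_rfl = LinearMap.id
  φ_comp : ∀ (p q r : P) (hpq : p ≤ q) (hqr : q ≤ r),
    (φ q r hqr).comp (φ p q hpq) = φ p r (hpq.trans hqr)

attribute [instance] PersMod.acg PersMod.mod

variable {k P}

namespace PersMod

lemma φ_self_apply (M : PersMod k P) (p : P) (v : M.V p) : M.φ p p le_rfl v = v := by
  rw [M.φ_self]; rfl

lemma φ_comp_apply (M : PersMod k P) (p q r : P) (hpq : p ≤ q) (hqr : q ≤ r) (v : M.V p) :
    M.φ q r hqr (M.φ p q hpq v) = M.φ p r (hpq.trans hqr) v := by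
  rw [← M.φ_comp p q r hpq hqr]; rfl

/-- The submodule of sections of `M` over a subset `I ⊆ P`. -/
def sections (M : PersMod k P) (I : Set P) : Submodule k (∀ p : I, M.V p) where
  carrier := {ℓ | ∀ (p q : I) (h : (p : P) ≤ (q : P)), M.φ p q h (ℓ p) = ℓ q}
  add_mem' := by
    intro a b ha hb p q h
    simp only [Pi.add_apply, map_add, ha p q h, hb p q h]
  zero_mem' := by
    intro p q h
    simp only [Pi.zero_apply, map_zero]
  smul_mem' := by
    intro c a ha p q h
    simp only [Pi.smul_apply, map_smul, ha p q h]

/-- The relations submodule used to present the colimit of `M` over `I`. -/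
noncomputable def colimRel (M : PersMod k P) (I : Set P) :
    Submodule k (Π₀ p : I, M.V p) :=
  Submodule.span k {x | ∃ (p q : I) (h : (p : P) ≤ (q : P)) (v : M.V p),
    x = DFinsupp.lsingle (R := k) p v - DFinsupp.lsingle (R := k) q (M.φ p q h v)}

/-- The canonical limit-to-colimit map of `M` over `I`, based at `p0 ∈ I`. -/
noncomputable def limToColim (M : PersMod k P) (I : Set P) (p0 : P) (hp : p0 ∈ I) :
    (M.sections I) →ₗ[k] (Π₀ p : I, M.V p) ⧸ M.colimRel I :=
  (M.colimRel I).mkQ ∘ₗ (DFinsupp.lsingle (R := k) (⟨p0, hp⟩ : I)) ∘ₗ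
    (LinearMap.proj (⟨p0, hp⟩ : I)) ∘ₗ (M.sections I).subtype

/-- The generalized rank of `M` over `I`, based at `p0 ∈ I`. -/
noncomputable def rkAt (M : PersMod k P) (I : Set P) (p0 : P) (hp : p0 ∈ I) : ℕ :=
  Module.finrank k (LinearMap.range (M.limToColim I p0 hp))

/-- The generalized rank of `M` over `I` (with a choice of basepoint; for a connected
subposet `I` this is independent of the basepoint). -/
noncomputable def rk (M : PersMod k P) (I : Set P) : ℕ :=
  if h : I.Nonempty then M.rkAt I h.choose h.choose_spec else 0

end PersMod

/-- One step of a zigzag inside `I`. -/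
def zigStep (I : Set P) (a b : P) : Prop := a ∈ I ∧ b ∈ I ∧ (a ≤ b ∨ b ≤ a)

/-- `I` is a connected subposet of `P`. -/
def IsConnectedPoset (I : Set P) : Prop :=
  I.Nonempty ∧ ∀ a ∈ I, ∀ b ∈ I, Relation.ReflTransGen (zigStep I) a b

/-- `I` is a convex subset of `P`. -/
def IsConvexPoset (I : Set P) : Prop :=
  ∀ ⦃a b c : P⦄, a ∈ I → c ∈ I → a ≤ b → b ≤ c → b ∈ I

/-- `I` is an interval of `P`: nonempty, convex and connected. -/
def IsIntervalPoset (I : Set P) : Prop := IsConvexPoset I ∧ IsConnectedPoset I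

namespace PersMod

/-- Isomorphism of persistence modules. -/
structure Iso (M N : PersMod k P) where
  e : ∀ p : P, M.V p ≃ₗ[k] N.V p
  comm : ∀ (p q : P) (h : p ≤ q) (v : M.V p), e q (M.φ p q h v) = N.φ p q h (e p v)

/-- Binary direct sum of persistence modules. -/
def dSum (M N : PersMod k P) : PersMod k P where
  V p := M.V p × N.V p
  φ p q h := (M.φ p q h).prodMap (N.φ p q h)
  φ_self p := by
    show (M.φ p p le_rfl).prodMap (N.φ p p le_rfl) = LinearMap.id
    apply LinearMap.ext
    rintro ⟨a, b⟩
    simp [M.φ_self_apply, N.φ_self_apply]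
  φ_comp p q r hpq hqr := by
    show ((M.φ q r hqr).prodMap (N.φ q r hqr)).comp ((M.φ p q hpq).prodMap (N.φ p q hpq)) = _
    apply LinearMap.ext
    rintro ⟨a, b⟩
    simp [M.φ_comp_apply, N.φ_comp_apply]

/-- Direct sum of an arbitrary family of persistence modules. -/
noncomputable def famSum {ι : Type} (Mf : ι → PersMod k P) : PersMod k P where
  V p := Π₀ i, (Mf i).V p
  φ p q h := DFinsupp.mapRange.linearMap (fun i => (Mf i).φ p q h)
  φ_self p := by
    show DFinsupp.mapRange.linearMap (fun i => (Mf i).φ p p le_rfl) = LinearMap.id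
    have : (fun i => (Mf i).φ p p le_rfl) = fun i => (LinearMap.id : (Mf i).V p →ₗ[k] (Mf i).V p) := by
      funext i; exact (Mf i).φ_self p
    rw [this, DFinsupp.mapRange.linearMap_id]
  φ_comp p q r hpq hqr := by
    show (DFinsupp.mapRange.linearMap (fun i => (Mf i).φ q r hqr)).comp
        (DFinsupp.mapRange.linearMap (fun i => (Mf i).φ p q hpq)) =
      DFinsupp.mapRange.linearMap (fun i => (Mf i).φ p r (hpq.trans hqr))
    rw [← DFinsupp.mapRange.linearMap_comp]
    congr 1
    funext i
    exact (Mf i).φ_comp p q r hpq hqr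

/-- `M` is a trivial (zero) persistence module. -/
def IsTrivial (M : PersMod k P) : Prop := ∀ p : P, Subsingleton (M.V p)

/-- `M` is indecomposable. -/
def Indecomposable (M : PersMod k P) : Prop :=
  ¬ M.IsTrivial ∧
    ∀ N₁ N₂ : PersMod k P, Nonempty (Iso M (dSum N₁ N₂)) → N₁.IsTrivial ∨ N₂.IsTrivial

end PersMod

/-- The fibers of the interval module. -/
noncomputable def kSub (I : Set P) (p : P) : Submodule k k := if p ∈ I then ⊤ else ⊥

/-- The interval module `k_I` supported on a convex subset `I`. -/
noncomputable def kMod (I : Set P) (hI : IsConvexPoset I) : PersMod k P where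
  V p := ↥(kSub (k := k) I p)
  φ p q _h := LinearMap.codRestrict _
    ((if p ∈ I ∧ q ∈ I then (1 : k) else 0) • (Submodule.subtype (kSub (k := k) I p)))
    (by
      intro x
      by_cases hq : q ∈ I
      · simp [kSub, hq]
      · have hpq : ¬ (p ∈ I ∧ q ∈ I) := fun h => hq h.2
        rw [if_neg hpq, zero_smul, LinearMap.zero_apply]
        exact Submodule.zero_mem _)
  φ_self p := by
    apply LinearMap.ext
    intro x
    apply Subtype.ext
    by_cases hp : p ∈ I
    · simp [hp]
    · have hx : (x : k) = 0 := by
        have := x.2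
        simp only [kSub, if_neg hp, Submodule.mem_bot] at this
        exact this
      simp [hp, hx]
  φ_comp p q r hpq hqr := by
    apply LinearMap.ext
    intro x
    apply Subtype.ext
    by_cases hp : p ∈ I
    · by_cases hr : r ∈ I
      · have hq : q ∈ I := hI hp hr hpq hqr
        simp [hp, hq, hr]
      · have h1 : ¬ (q ∈ I ∧ r ∈ I) := fun h => hr h.2
        have h2 : ¬ (p ∈ I ∧ r ∈ I) := fun h => hr h.2
        simp [h1, h2]
    · have hx : (x : k) = 0 := by
        have := x.2
        simp only [kSub, if_neg hp, Submodule.mem_bot] at this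
        exact this
      have h1 : ¬ (p ∈ I ∧ q ∈ I) := fun h => hp h.1
      have h2 : ¬ (p ∈ I ∧ r ∈ I) := fun h => hp h.1
      by_cases h3 : q ∈ I ∧ r ∈ I <;> simp [h1, h2, h3, hx]


/-! ### Auxiliary machinery -/

namespace PersMod

/-- Identity isomorphism. -/
def Iso.refl (M : PersMod k P) : M.Iso M where
  e p := LinearEquiv.refl k (M.V p)
  comm p q h v := rfl

/-- Inverse isomorphism. -/
noncomputable def Iso.symm {M N : PersMod k P} (E : M.Iso N) : N.Iso M where
  e p := (E.e p).symm
  comm p q h v := by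
    apply (E.e q).injective
    rw [E.comm p q h]
    simp

/-- Composition of isomorphisms. -/
noncomputable def Iso.trans {M N O : PersMod k P} (E1 : M.Iso N) (E2 : N.Iso O) : M.Iso O where
  e p := (E1.e p).trans (E2.e p)
  comm p q h v := by
    simp [LinearEquiv.trans_apply, E1.comm, E2.comm]

/-- Isomorphism from an equality. -/
def isoOfEq {M N : PersMod k P} (h : M = N) : M.Iso N := h ▸ Iso.refl M

lemma limToColim_apply (M : PersMod k P) (I : Set P) (p0 : P) (hp : p0 ∈ I)
    (ℓ : M.sections I) :
    M.limToColim I p0 hp ℓ =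
      Submodule.Quotient.mk (DFinsupp.single (⟨p0, hp⟩ : I) ((ℓ : ∀ p : I, M.V p) ⟨p0, hp⟩)) :=
  rfl

section IsoInv

variable {M N : PersMod k P} (E : M.Iso N) (I : Set P)

/-- The pointwise equivalence on `I`-indexed pi types. -/
noncomputable def isoPiEquiv : (∀ p : I, M.V p) ≃ₗ[k] (∀ p : I, N.V p) :=
  LinearEquiv.piCongrRight (fun p : I => E.e p)

lemma isoPiEquiv_map_sections :
    (M.sections I).map (isoPiEquiv E I : (∀ p : I, M.V p) →ₗ[k] (∀ p : I, N.V p))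
      = N.sections I := by
  ext ℓ
  constructor
  · rintro ⟨m, hm, rfl⟩ p q h
    simpa [isoPiEquiv, ← E.comm] using congrArg (E.e q) (hm p q h)
  · intro hℓ
    refine ⟨fun p => (E.e p).symm (ℓ p), fun p q h => ?_, ?_⟩
    · apply (E.e q).injective
      rw [E.comm p q h]
      simp [hℓ p q h]
    · funext p
      simp [isoPiEquiv]

/-- The equivalence on dfinsupps. -/
noncomputable def isoDEquiv : (Π₀ p : I, M.V p) ≃ₗ[k] (Π₀ p : I, N.V p) :=
  DFinsupp.mapRange.linearEquiv (fun p : I => E.e p)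

lemma isoDEquiv_map_colimRel :
    (M.colimRel I).map (isoDEquiv E I : (Π₀ p : I, M.V p) →ₗ[k] (Π₀ p : I, N.V p))
      = N.colimRel I := by
  rw [colimRel, colimRel, Submodule.map_span]
  congr 1
  ext x
  simp only [Set.mem_image, Set.mem_setOf_eq]
  constructor
  · rintro ⟨y, ⟨p, q, h, v, rfl⟩, rfl⟩
    refine ⟨p, q, h, E.e p v, ?_⟩
    simp only [DFinsupp.lsingle_apply, map_sub, isoDEquiv, LinearEquiv.coe_coe,
      DFinsupp.mapRange.linearEquiv_apply, DFinsupp.mapRange_single, E.comm]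
  · rintro ⟨p, q, h, v, rfl⟩
    refine ⟨DFinsupp.single p ((E.e p).symm v)
      - DFinsupp.single q (M.φ p q h ((E.e p).symm v)), ⟨p, q, h, (E.e p).symm v, by simp⟩, ?_⟩
    simp only [DFinsupp.lsingle_apply, map_sub, isoDEquiv, LinearEquiv.coe_coe,
      DFinsupp.mapRange.linearEquiv_apply, DFinsupp.mapRange_single, E.comm]
    simp

/-- The equivalence on colimits. -/
noncomputable def isoColimEquiv :
    ((Π₀ p : I, M.V p) ⧸ M.colimRel I) ≃ₗ[k] ((Π₀ p : I, N.V p) ⧸ N.colimRel I) :=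
  Submodule.Quotient.equiv _ _ (isoDEquiv E I) (isoDEquiv_map_colimRel E I)

/-- The equivalence on sections. -/
noncomputable def isoSectionsEquiv : (M.sections I) ≃ₗ[k] (N.sections I) :=
  ((isoPiEquiv E I).submoduleMap (M.sections I)).trans
    (LinearEquiv.ofEq _ _ (isoPiEquiv_map_sections E I))

lemma isoLimToColim_comm (p0 : P) (hp : p0 ∈ I) (ℓ : M.sections I) :
    N.limToColim I p0 hp (isoSectionsEquiv E I ℓ)
      = isoColimEquiv E I (M.limToColim I p0 hp ℓ) := by
  rw [limToColim_apply, limToColim_apply]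
  have h1 : ((isoSectionsEquiv E I ℓ : ∀ p : I, N.V p)) ⟨p0, hp⟩
      = E.e p0 ((ℓ : ∀ p : I, M.V p) ⟨p0, hp⟩) := rfl
  rw [h1]
  have h2 : ∀ x : Π₀ p : I, M.V p,
      isoColimEquiv E I (Submodule.Quotient.mk x) = Submodule.Quotient.mk (isoDEquiv E I x) :=
    fun x => rfl
  rw [h2]
  congr 1
  simp [isoDEquiv, DFinsupp.mapRange_single]

include E in
lemma rkAt_eq_of_iso (p0 : P) (hp : p0 ∈ I) :
    M.rkAt I p0 hp = N.rkAt I p0 hp := by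
  have hcomp : (N.limToColim I p0 hp) ∘ₗ (isoSectionsEquiv E I : M.sections I →ₗ[k] N.sections I)
      = (isoColimEquiv E I : _ →ₗ[k] _) ∘ₗ (M.limToColim I p0 hp) := by
    apply LinearMap.ext
    intro ℓ
    exact isoLimToColim_comm E I p0 hp ℓ
  have hr : LinearMap.range (N.limToColim I p0 hp)
      = (LinearMap.range (M.limToColim I p0 hp)).map (isoColimEquiv E I : _ →ₗ[k] _) := by
    rw [← LinearMap.range_comp, ← hcomp, LinearMap.range_comp,
      LinearEquiv.range, Submodule.map_top]
  rw [rkAt, rkAt, hr, LinearEquiv.finrank_map_eq]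

include E in
lemma rk_eq_of_iso : M.rk I = N.rk I := by
  by_cases h : I.Nonempty
  · rw [rk, rk, dif_pos h, dif_pos h, rkAt_eq_of_iso E]
  · rw [rk, rk, dif_neg h, dif_neg h]

end IsoInv

end PersMod

/-! ### Computation of the rank of a sum of interval modules -/

lemma mem_kSub {I : Set P} {p : P} (h : p ∈ I) (c : k) : c ∈ kSub (k := k) I p := by
  simp [kSub, h]

lemma kSub_eq_zero {I : Set P} {p : P} (h : p ∉ I) (v : ↥(kSub (k := k) I p)) : v = 0 := by
  have hv := v.2
  simp only [kSub, if_neg h, Submodule.mem_bot] at hv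
  exact Subtype.ext hv

namespace PersMod

section FamSumRank

variable {ι : Type} (J : ι → Set P) (hconv : ∀ i, IsConvexPoset (J i)) (X : Set P)

/-- One zigzag step does not change the class of a section in the colimit. -/
lemma mk_single_sec_step (M : PersMod k P) (ℓ : M.sections X) (p q : X) (h : (p : P) ≤ (q : P)) :
    (Submodule.Quotient.mk (DFinsupp.single p ((ℓ : ∀ p : X, M.V p) p)) :
        (Π₀ p : X, M.V p) ⧸ M.colimRel X)
      = Submodule.Quotient.mk (DFinsupp.single q ((ℓ : ∀ p : X, M.V p) q)) := by
  rw [Submodule.Quotient.eq]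
  apply Submodule.subset_span
  refine ⟨p, q, h, (ℓ : ∀ p : X, M.V p) p, ?_⟩
  rw [DFinsupp.lsingle_apply, DFinsupp.lsingle_apply, ℓ.2 p q h]

lemma mk_single_sec_zig (M : PersMod k P) (ℓ : M.sections X) :
    ∀ {a b : P}, Relation.ReflTransGen (zigStep X) a b →
    ∀ (ha : a ∈ X) (hb : b ∈ X),
    (Submodule.Quotient.mk (DFinsupp.single (⟨a, ha⟩ : X.Elem) ((ℓ : ∀ p : X, M.V p) ⟨a, ha⟩)) :
        (Π₀ p : X, M.V p) ⧸ M.colimRel X)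
      = Submodule.Quotient.mk (DFinsupp.single (⟨b, hb⟩ : X.Elem) ((ℓ : ∀ p : X, M.V p) ⟨b, hb⟩)) := by
  intro a b hab
  induction hab with
  | refl => intro ha hb; rfl
  | tail hab hbc ih =>
    intro ha hc
    rcases hbc with ⟨hbX, hcX, hbc | hcb⟩
    · exact (ih ha hbX).trans (mk_single_sec_step X M ℓ ⟨_, hbX⟩ ⟨_, hcX⟩ hbc)
    · exact (ih ha hbX).trans (mk_single_sec_step X M ℓ ⟨_, hcX⟩ ⟨_, hbX⟩ hcb).symm

lemma kMod_φ_one {I : Set P} (hI : IsConvexPoset I) {p q : P} (h : p ≤ q)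
    (hpI : p ∈ I) (hqI : q ∈ I) (v : ↥(kSub (k := k) I p)) :
    (kMod (k := k) I hI).φ p q h v = (⟨(v : k), mem_kSub hqI _⟩ : ↥(kSub (k := k) I q)) := by
  refine Subtype.ext ?_
  show ((if p ∈ I ∧ q ∈ I then (1:k) else 0) • (v : k)) = (v : k)
  rw [if_pos ⟨hpI, hqI⟩, one_smul]

/-- Reinterpret an element of the direct sum as a dfinsupp. -/
def toDF {ι' : Type} (Mf : ι' → PersMod k P) (p : P) (x : (famSum Mf).V p) :
    Π₀ i, (Mf i).V p := x

lemma famSum_φ_apply {ι' : Type} (Mf : ι' → PersMod k P) (p q : P) (h : p ≤ q)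
    (x : (famSum Mf).V p) (i : ι') :
    toDF Mf q ((famSum Mf).φ p q h x) i = (Mf i).φ p q h (toDF Mf p x i) := by
  show DFinsupp.mapRange.linearMap (fun j => (Mf j).φ p q h) (toDF Mf p x) i
    = (Mf i).φ p q h (toDF Mf p x i)
  rw [DFinsupp.mapRange.linearMap_apply, DFinsupp.mapRange_apply]

lemma famSum_φ_single {ι' : Type} (Mf : ι' → PersMod k P) (p q : P) (h : p ≤ q)
    (i : ι') (w : (Mf i).V p) :
    (famSum Mf).φ p q h (DFinsupp.single i w)
      = (DFinsupp.single i ((Mf i).φ p q h w) : Π₀ i, (Mf i).V q) := by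
  show DFinsupp.mapRange.linearMap (fun j => (Mf j).φ p q h) (DFinsupp.single i w)
    = (DFinsupp.single i ((Mf i).φ p q h w) : Π₀ i, (Mf i).V q)
  rw [DFinsupp.mapRange.linearMap_apply, DFinsupp.mapRange_single]

lemma comp_section {ι' : Type} (Mf : ι' → PersMod k P) (ℓ : (famSum Mf).sections X) (i : ι') :
    (fun p : X => (DFinsupp.single i
        (toDF Mf p ((ℓ : ∀ p : X, (famSum Mf).V p) p) i)
      : Π₀ j, (Mf j).V (p : P))) ∈ (famSum Mf).sections X := by
  intro p q h
  have hsec : (famSum Mf).φ p q h ((ℓ : ∀ p : X, (famSum Mf).V p) p)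
      = (ℓ : ∀ p : X, (famSum Mf).V p) q := ℓ.2 p q h
  have hcomp := famSum_φ_apply Mf p q h ((ℓ : ∀ p : X, (famSum Mf).V p) p) i
  show (famSum Mf).φ (p : P) (q : P) h (DFinsupp.single i _) = _
  rw [famSum_φ_single]
  congr 1
  rw [← hcomp, hsec]

/-- The underlying scalar of an element of an interval module fiber. -/
def toK {I : Set P} {hI : IsConvexPoset I} {p : P} (x : (kMod (k := k) I hI).V p) : k :=
  (show ↥(kSub (k := k) I p) from x).1

@[simp] lemma toK_mk {I : Set P} {hI : IsConvexPoset I} {p : P} (c : k) (h : c ∈ kSub (k := k) I p) :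
    toK (hI := hI) (⟨c, h⟩ : ↥(kSub (k := k) I p)) = c := rfl

lemma famSum_kMod_rkAt
    (hXconn : ∀ a ∈ X, ∀ b ∈ X, Relation.ReflTransGen (zigStep X) a b)
    (hfin : {i : ι | X ⊆ J i}.Finite) (p0 : P) (hp : p0 ∈ X) :
    (famSum fun i => kMod (k := k) (J i) (hconv i)).rkAt X p0 hp = Nat.card {i : ι | X ⊆ J i} := by
  classical
  haveI : Fintype {i : ι | X ⊆ J i} := hfin.fintype
  -- the canonical constant sections indexed by S
  have hsct : ∀ i : {i : ι | X ⊆ J i}, (fun p : X => (DFinsupp.single i.1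
        (⟨1, mem_kSub (i.2 p.2) 1⟩ : ↥(kSub (k := k) (J i.1) (p : P)))
        : Π₀ j, (kMod (k := k) (J j) (hconv j)).V (p : P)))
      ∈ (famSum fun i => kMod (k := k) (J i) (hconv i)).sections X := by
    intro i p q h
    show (famSum fun i => kMod (k := k) (J i) (hconv i)).φ (p : P) (q : P) h
      (DFinsupp.single i.1 (⟨1, mem_kSub (i.2 p.2) 1⟩ : ↥(kSub (k := k) (J i.1) (p : P)))) = _
    refine (famSum_φ_single _ _ _ _ _ _).trans ?_
    congr 1
    exact kMod_φ_one (hconv i.1) h (i.2 p.2) (i.2 q.2) _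
  let sct : ∀ _ : {i : ι | X ⊆ J i}, ((famSum fun i => kMod (k := k) (J i) (hconv i)).sections X) :=
    fun i => ⟨_, hsct i⟩
  let eF : {i : ι | X ⊆ J i} →
      ((Π₀ p : X, (famSum fun i => kMod (k := k) (J i) (hconv i)).V p)
        ⧸ (famSum fun i => kMod (k := k) (J i) (hconv i)).colimRel X) :=
    fun i => (famSum fun i => kMod (k := k) (J i) (hconv i)).limToColim X p0 hp (sct i)
  have heF : ∀ i : {i : ι | X ⊆ J i}, eF i
      = Submodule.Quotient.mk (DFinsupp.single (⟨p0, hp⟩ : X.Elem)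
        ((DFinsupp.single i.1 (⟨1, mem_kSub (i.2 hp) 1⟩ : ↥(kSub (k := k) (J i.1) p0)))
          : Π₀ j, (kMod (k := k) (J j) (hconv j)).V p0)) := fun i => rfl
  -- the range of the limit-to-colimit map is the span of the `eF i`
  have hrange : LinearMap.range ((famSum fun i => kMod (k := k) (J i) (hconv i)).limToColim X p0 hp)
      = Submodule.span k (Set.range eF) := by
    apply le_antisymm
    · rintro y ⟨ℓ, rfl⟩
      rw [limToColim_apply]
      have hterm : ∀ j : ι,
          ((((famSum fun i => kMod (k := k) (J i) (hconv i)).colimRel X).mkQ ∘ₗ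
            DFinsupp.lsingle (R := k) (⟨p0, hp⟩ : X.Elem))
            (DFinsupp.single j
              (toDF (fun i => kMod (k := k) (J i) (hconv i)) p0
                ((ℓ : ∀ p : X, (famSum fun i => kMod (k := k) (J i) (hconv i)).V p) ⟨p0, hp⟩) j)
              : Π₀ j', (kMod (k := k) (J j') (hconv j')).V p0))
          ∈ Submodule.span k (Set.range eF) := by
        intro j
        by_cases hjS : X ⊆ J j
        · -- rescale to the canonical generator
          set c : k := toK (toDF (fun i => kMod (k := k) (J i) (hconv i)) p0
              ((ℓ : ∀ p : X, (famSum fun i => kMod (k := k) (J i) (hconv i)).V p) ⟨p0, hp⟩) j) with hc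
          have hval : toDF (fun i => kMod (k := k) (J i) (hconv i)) p0
              ((ℓ : ∀ p : X, (famSum fun i => kMod (k := k) (J i) (hconv i)).V p) ⟨p0, hp⟩) j
              = c • (⟨1, mem_kSub (hjS hp) 1⟩ : ↥(kSub (k := k) (J j) p0)) := by
            refine Subtype.ext ?_
            show c = c • (1:k)
            rw [smul_eq_mul, mul_one]
          rw [hval]
          erw [DFinsupp.single_smul, map_smul]
          refine Submodule.smul_mem _ _ (Submodule.subset_span ⟨⟨j, hjS⟩, ?_⟩)
          rw [heF ⟨j, hjS⟩]
          rfl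
        · -- the class vanishes
          obtain ⟨qq, hqqX, hqqJ⟩ := Set.not_subset.mp hjS
          have hz := mk_single_sec_zig X (famSum fun i => kMod (k := k) (J i) (hconv i))
            ⟨_, comp_section X (fun i => kMod (k := k) (J i) (hconv i)) ℓ j⟩
            (hXconn p0 hp qq hqqX) hp hqqX
          have hz' : (Submodule.Quotient.mk (DFinsupp.single (⟨p0, hp⟩ : X.Elem)
                ((DFinsupp.single j (toDF (fun i => kMod (k := k) (J i) (hconv i)) p0
                  ((ℓ : ∀ p : X, (famSum fun i => kMod (k := k) (J i) (hconv i)).V p) ⟨p0, hp⟩) j))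
                  : Π₀ j', (kMod (k := k) (J j') (hconv j')).V p0))
              : (Π₀ p : X, (famSum fun i => kMod (k := k) (J i) (hconv i)).V p)
                ⧸ (famSum fun i => kMod (k := k) (J i) (hconv i)).colimRel X)
              = Submodule.Quotient.mk (DFinsupp.single (⟨qq, hqqX⟩ : X.Elem)
                ((DFinsupp.single j (toDF (fun i => kMod (k := k) (J i) (hconv i)) qq
                  ((ℓ : ∀ p : X, (famSum fun i => kMod (k := k) (J i) (hconv i)).V p) ⟨qq, hqqX⟩) j))
                  : Π₀ j', (kMod (k := k) (J j') (hconv j')).V qq)) := hz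
          have hzero : toDF (fun i => kMod (k := k) (J i) (hconv i)) qq
              ((ℓ : ∀ p : X, (famSum fun i => kMod (k := k) (J i) (hconv i)).V p) ⟨qq, hqqX⟩) j = 0 :=
            kSub_eq_zero hqqJ _
          show Submodule.Quotient.mk (DFinsupp.single (⟨p0, hp⟩ : X.Elem)
              ((DFinsupp.single j (toDF (fun i => kMod (k := k) (J i) (hconv i)) p0
                ((ℓ : ∀ p : X, (famSum fun i => kMod (k := k) (J i) (hconv i)).V p) ⟨p0, hp⟩) j))
                : Π₀ j', (kMod (k := k) (J j') (hconv j')).V p0))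
            ∈ Submodule.span k (Set.range eF)
          rw [hz', hzero, DFinsupp.single_zero]
          erw [DFinsupp.single_zero]
          exact Submodule.zero_mem _
      show (((famSum fun i => kMod (k := k) (J i) (hconv i)).colimRel X).mkQ ∘ₗ
          DFinsupp.lsingle (R := k) (⟨p0, hp⟩ : X.Elem))
          (toDF (fun i => kMod (k := k) (J i) (hconv i)) p0
            ((ℓ : ∀ p : X, (famSum fun i => kMod (k := k) (J i) (hconv i)).V p) ⟨p0, hp⟩))
        ∈ Submodule.span k (Set.range eF)
      rw [← DFinsupp.sum_single (f := toDF (fun i => kMod (k := k) (J i) (hconv i)) p0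
            ((ℓ : ∀ p : X, (famSum fun i => kMod (k := k) (J i) (hconv i)).V p) ⟨p0, hp⟩))]
      erw [map_dfinsuppSum]
      exact Submodule.dfinsuppSum_mem _ _ _ (fun j _ => hterm j)
    · rw [Submodule.span_le]
      rintro y ⟨i, rfl⟩
      exact ⟨sct i, rfl⟩
  -- linear independence of the `eF i` via evaluation functionals
  let gp : ∀ p : X, (Π₀ j, (kMod (k := k) (J j) (hconv j)).V (p : P)) →ₗ[k] ({i : ι | X ⊆ J i} → k) :=
    fun p => LinearMap.pi (fun i : {i : ι | X ⊆ J i} =>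
      (kSub (k := k) (J i.1) (p : P)).subtype ∘ₗ DFinsupp.lapply i.1)
  let g : (Π₀ p : X, (famSum fun i => kMod (k := k) (J i) (hconv i)).V p) →ₗ[k]
      ({i : ι | X ⊆ J i} → k) := DFinsupp.lsum k gp
  have hgsingle : ∀ (p : X) (w : Π₀ j, (kMod (k := k) (J j) (hconv j)).V (p : P)),
      g (DFinsupp.single p w) = gp p w := fun p w => DFinsupp.lsum_single _ _ _ _
  have hker : (famSum fun i => kMod (k := k) (J i) (hconv i)).colimRel X ≤ LinearMap.ker g := by
    rw [colimRel, Submodule.span_le]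
    rintro x ⟨p, q, h, v, rfl⟩
    simp only [SetLike.mem_coe, LinearMap.mem_ker, map_sub, DFinsupp.lsingle_apply]
    rw [hgsingle p v, hgsingle q ((famSum fun i => kMod (k := k) (J i) (hconv i)).φ p q h v),
      sub_eq_zero]
    funext i
    have h1 := famSum_φ_apply (fun i => kMod (k := k) (J i) (hconv i)) p q h v i.1
    have h2 := kMod_φ_one (hconv i.1) h (i.2 p.2) (i.2 q.2)
      (toDF (fun i => kMod (k := k) (J i) (hconv i)) p v i.1)
    show toK (toDF (fun i => kMod (k := k) (J i) (hconv i)) p v i.1)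
      = toK (toDF (fun i => kMod (k := k) (J i) (hconv i)) q
          ((famSum fun i => kMod (k := k) (J i) (hconv i)).φ p q h v) i.1)
    rw [h1, h2]
    simp [Nat.card_coe_set_eq]
    rfl
  have hfe : ∀ i : {i : ι | X ⊆ J i},
      (Submodule.liftQ _ g hker) (eF i) = Pi.single i (1:k) := by
    intro i
    rw [heF i, Submodule.liftQ_apply, hgsingle]
    funext jj
    show toK (I := J jj.1) (hI := hconv jj.1) (p := p0)
        ((DFinsupp.single i.1 (⟨1, mem_kSub (i.2 hp) 1⟩ : ↥(kSub (k := k) (J i.1) p0))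
          : Π₀ j, (kMod (k := k) (J j) (hconv j)).V p0) jj.1)
      = Pi.single (M := fun _ : {i : ι | X ⊆ J i} => k) i (1:k) jj
    rcases eq_or_ne jj i with rfl | hne
    · erw [DFinsupp.single_eq_same, Pi.single_eq_same]
      rfl
    · erw [DFinsupp.single_eq_of_ne (fun hc => hne (Subtype.ext hc)), Pi.single_eq_of_ne hne]
      rfl
  have hLI : LinearIndependent k eF := by
    apply LinearIndependent.of_comp (Submodule.liftQ _ g hker)
    have hcomp : (⇑(Submodule.liftQ _ g hker) ∘ eF)
        = fun i : {i : ι | X ⊆ J i} => Pi.single i (1:k) := funext hfe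
    rw [hcomp, Fintype.linearIndependent_iff]
    intro c hc j
    have hcj := congrFun hc j
    simpa [Pi.single_apply] using hcj
  rw [rkAt, hrange, finrank_span_eq_card hLI]
  exact (Nat.card_eq_fintype_card).symm

lemma famSum_kMod_rk (hXint : IsIntervalPoset X) (hfin : {i : ι | X ⊆ J i}.Finite) :
    (famSum fun i => kMod (k := k) (J i) (hconv i)).rk X = Nat.card {i : ι | X ⊆ J i} := by
  obtain ⟨hconvX, hne, hconn⟩ := hXint
  rw [rk, dif_pos hne]
  exact famSum_kMod_rkAt J hconv X hconn hfin _ _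

end FamSumRank

section Reindex

variable {ι κ : Type} (g : ι ≃ κ) (Nf : κ → PersMod k P)

/-- Reindexing map on direct sums. -/
noncomputable def reindexL (p : P) :
    (Π₀ i, (Nf (g i)).V p) →ₗ[k] (Π₀ j, (Nf j).V p) :=
  DFinsupp.lsum (R := k) k (fun i => DFinsupp.lsingle (R := k) (M := fun j => (Nf j).V p) (g i))

lemma reindexL_single (p : P) (i : ι) (b : (Nf (g i)).V p) :
    reindexL g Nf p (DFinsupp.single i b) = DFinsupp.single (g i) b := by
  unfold reindexL
  rw [DFinsupp.lsum_single, DFinsupp.lsingle_apply]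

lemma reindexL_bijective (p : P) : Function.Bijective (reindexL g Nf p) := by
  classical
  constructor
  · have hli : Function.LeftInverse (DFinsupp.comapDomain' (β := fun j => (Nf j).V p) g g.left_inv)
        (reindexL g Nf p) := by
      intro x
      induction x using DFinsupp.induction with
      | h0 => rw [map_zero, DFinsupp.comapDomain'_zero]
      | ha i b f h1 h2 ih =>
        rw [map_add, DFinsupp.comapDomain'_add, ih, reindexL_single,
          DFinsupp.comapDomain'_single]
    exact hli.injective
  · intro y
    induction y using DFinsupp.induction with
    | h0 => exact ⟨0, map_zero _⟩
    | ha j b f hj hb ih =>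
      obtain ⟨x, hx⟩ := ih
      obtain ⟨i, rfl⟩ := g.surjective j
      exact ⟨DFinsupp.single i b + x, by rw [map_add, hx, reindexL_single]⟩

/-- Reindexing linear equivalence on direct sums. -/
noncomputable def reindexEquiv (p : P) : (Π₀ i, (Nf (g i)).V p) ≃ₗ[k] (Π₀ j, (Nf j).V p) :=
  LinearEquiv.ofBijective (reindexL g Nf p) (reindexL_bijective g Nf p)

/-- Reindexing isomorphism of direct sums of persistence modules. -/
noncomputable def famSumReindexIso : (famSum fun i => Nf (g i)).Iso (famSum Nf) where
  e p := reindexEquiv g Nf p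
  comm p q h v := by
    have hmaps : (reindexL g Nf q) ∘ₗ ((famSum fun i => Nf (g i)).φ p q h)
        = ((famSum Nf).φ p q h) ∘ₗ (reindexL g Nf p) := by
      refine DFinsupp.lhom_ext' (fun i => ?_)
      apply LinearMap.ext
      intro b
      show reindexL g Nf q ((famSum fun i => Nf (g i)).φ p q h (DFinsupp.single i b))
        = (famSum Nf).φ p q h (reindexL g Nf p (DFinsupp.single i b))
      rw [famSum_φ_single, reindexL_single, reindexL_single, famSum_φ_single]
    show reindexL g Nf q ((famSum fun i => Nf (g i)).φ p q h v)
      = (famSum Nf).φ p q h (reindexL g Nf p v)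
    exact LinearMap.congr_fun hmaps v

end Reindex

end PersMod

lemma kMod_congr {I I' : Set P} (h : I = I') (hI : IsConvexPoset I) (hI' : IsConvexPoset I') :
    kMod (k := k) I hI = kMod (k := k) I' hI' := by subst h; rfl

/-! ### Counting multiplicities -/

lemma card_subset_eq_sum {ι : Type} (𝓘 : Set (Set P)) (X : Set P)
    (hpifX : {Y : Set P | Y ∈ 𝓘 ∧ X ⊆ Y}.Finite)
    (JM : ι → Set P) (hJM : ∀ i, JM i ∈ 𝓘) (hfinX : {i : ι | X ⊆ JM i}.Finite) :
    Nat.card {i : ι | X ⊆ JM i}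
      = ∑ Y ∈ hpifX.toFinset, Nat.card {i : ι | JM i = Y} := by
  classical
  rw [Nat.card_coe_set_eq, Set.ncard_eq_toFinset_card _ hfinX,
    Finset.card_eq_sum_card_fiberwise (f := JM) (t := hpifX.toFinset)
      (fun i hi => hpifX.mem_toFinset.mpr ⟨hJM i, hfinX.mem_toFinset.mp hi⟩)]
  refine Finset.sum_congr rfl (fun Y hY => ?_)
  have hYX : X ⊆ Y := ((hpifX.mem_toFinset).mp hY).2
  have hset : {i : ι | JM i = Y} = ↑(hfinX.toFinset.filter (fun i => JM i = Y)) := by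
    ext i
    simp only [Finset.coe_filter, Set.Finite.mem_toFinset, Set.mem_setOf_eq]
    exact ⟨fun h => ⟨h ▸ hYX, h⟩, fun h => h.2⟩
  rw [Nat.card_coe_set_eq, hset, Set.ncard_coe_finset]


lemma multiplicity_eq {ι κ : Type} (𝓘 : Set (Set P))
    (hpif : ∀ X ∈ 𝓘, {Y : Set P | Y ∈ 𝓘 ∧ X ⊆ Y}.Finite)
    (JM : ι → Set P) (JN : κ → Set P) (hJM : ∀ i, JM i ∈ 𝓘) (hJN : ∀ j, JN j ∈ 𝓘)
    (hfinM : ∀ X ∈ 𝓘, {i : ι | X ⊆ JM i}.Finite)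
    (hfinN : ∀ X ∈ 𝓘, {j : κ | X ⊆ JN j}.Finite)
    (hcard : ∀ X ∈ 𝓘, Nat.card {i : ι | X ⊆ JM i} = Nat.card {j : κ | X ⊆ JN j}) :
    ∀ Y : Set P, Nat.card {i : ι | JM i = Y} = Nat.card {j : κ | JN j = Y} := by
  classical
  have hnotin : ∀ Y : Set P, Y ∉ 𝓘 →
      Nat.card {i : ι | JM i = Y} = Nat.card {j : κ | JN j = Y} := by
    intro Y hY
    have h1 : {i : ι | JM i = Y} = ∅ := by
      ext i; simp only [Set.mem_setOf_eq, Set.mem_empty_iff_false, iff_false]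
      exact fun h => hY (h ▸ hJM i)
    have h2 : {j : κ | JN j = Y} = ∅ := by
      ext j; simp only [Set.mem_setOf_eq, Set.mem_empty_iff_false, iff_false]
      exact fun h => hY (h ▸ hJN j)
    rw [h1, h2]
    simp [Nat.card_coe_set_eq]
  suffices H : ∀ n : ℕ, ∀ Y : Set P, ∀ hY : Y ∈ 𝓘, (hpif Y hY).toFinset.card ≤ n →
      Nat.card {i : ι | JM i = Y} = Nat.card {j : κ | JN j = Y} by
    intro Y
    by_cases hY : Y ∈ 𝓘
    · exact H _ Y hY le_rfl
    · exact hnotin Y hY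
  intro n
  induction n with
  | zero =>
    intro Y hY hle
    exfalso
    have hm : Y ∈ (hpif Y hY).toFinset := (hpif Y hY).mem_toFinset.mpr ⟨hY, subset_rfl⟩
    have := Finset.card_pos.mpr ⟨Y, hm⟩
    omega
  | succ n ih =>
    intro Y hY hle
    have hsM := card_subset_eq_sum 𝓘 Y (hpif Y hY) JM hJM (hfinM Y hY)
    have hsN := card_subset_eq_sum 𝓘 Y (hpif Y hY) JN hJN (hfinN Y hY)
    have hYm : Y ∈ (hpif Y hY).toFinset := (hpif Y hY).mem_toFinset.mpr ⟨hY, subset_rfl⟩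
    rw [← Finset.add_sum_erase _ _ hYm] at hsM hsN
    have hrest : ∀ Z ∈ (hpif Y hY).toFinset.erase Y,
        Nat.card {i : ι | JM i = Z} = Nat.card {j : κ | JN j = Z} := by
      intro Z hZ
      have hZY : Z ≠ Y := Finset.ne_of_mem_erase hZ
      have hZm := (hpif Y hY).mem_toFinset.mp (Finset.mem_of_mem_erase hZ)
      refine ih Z hZm.1 ?_
      have hsub : (hpif Z hZm.1).toFinset ⊆ (hpif Y hY).toFinset.erase Y := by
        intro W hW
        have hWm := (hpif Z hZm.1).mem_toFinset.mp hW
        refine Finset.mem_erase.mpr ⟨?_, (hpif Y hY).mem_toFinset.mpr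
          ⟨hWm.1, hZm.2.trans hWm.2⟩⟩
        rintro rfl
        exact hZY (le_antisymm hWm.2 hZm.2)
      calc (hpif Z hZm.1).toFinset.card ≤ ((hpif Y hY).toFinset.erase Y).card :=
            Finset.card_le_card hsub
        _ = (hpif Y hY).toFinset.card - 1 := Finset.card_erase_of_mem hYm
        _ ≤ n := by omega
    have hsum : ∑ Z ∈ (hpif Y hY).toFinset.erase Y, Nat.card {i : ι | JM i = Z}
        = ∑ Z ∈ (hpif Y hY).toFinset.erase Y, Nat.card {j : κ | JN j = Z} :=
      Finset.sum_congr rfl hrest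
    have := hcard Y hY
    rw [hsM, hsN, hsum] at this
    omega

lemma exists_reindex {ι κ : Type} (f : ι → Set P) (h : κ → Set P)
    (hfib : ∀ Y : Set P, Nat.card {i : ι | f i = Y} = Nat.card {j : κ | h j = Y})
    (hfinf : ∀ Y, {i : ι | f i = Y}.Finite) (hfinh : ∀ Y, {j : κ | h j = Y}.Finite) :
    ∃ g : ι ≃ κ, ∀ i, h (g i) = f i := by
  have he : ∀ Y : Set P, Nonempty ({i : ι | f i = Y} ≃ {j : κ | h j = Y}) := by
    intro Y
    haveI := (hfinf Y).to_subtype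
    haveI := (hfinh Y).to_subtype
    exact Finite.card_eq.mp (hfib Y)
  refine ⟨(Equiv.sigmaFiberEquiv f).symm.trans
    ((Equiv.sigmaCongrRight (fun Y => (he Y).some)).trans (Equiv.sigmaFiberEquiv h)),
    fun i => ?_⟩
  exact ((he (f i)).some ⟨i, rfl⟩).2
/-- Completeness of the generalized rank invariant over `𝓘` on `𝓘`-decomposable modules,
when every principal ideal of `(𝓘, ⊇)` is finite. -/
theorem gri_complete_on_interval_decomposables
    (𝓘 : Set (Set P)) (hint : ∀ X (_ : X ∈ 𝓘), IsIntervalPoset X)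
    (hpif : ∀ X ∈ 𝓘, {Y : Set P | Y ∈ 𝓘 ∧ X ⊆ Y}.Finite)
    (M N : PersMod k P) {ι κ : Type} (JM : ι → Set P) (JN : κ → Set P)
    (hJM : ∀ i, JM i ∈ 𝓘) (hJN : ∀ j, JN j ∈ 𝓘)
    (hfM : ∀ p : P, {i : ι | p ∈ JM i}.Finite) (hfN : ∀ p : P, {j : κ | p ∈ JN j}.Finite)
    (isoM : Nonempty (M.Iso (PersMod.famSum fun i => kMod (JM i) (hint _ (hJM i)).1)))
    (isoN : Nonempty (N.Iso (PersMod.famSum fun j => kMod (JN j) (hint _ (hJN j)).1)))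
    (hrk : ∀ X ∈ 𝓘, M.rk X = N.rk X) :
    Nonempty (M.Iso N) := by
  classical
  obtain ⟨EM⟩ := isoM
  obtain ⟨EN⟩ := isoN
  have hfinM : ∀ X ∈ 𝓘, {i : ι | X ⊆ JM i}.Finite := by
    intro X hX
    obtain ⟨p, hpX⟩ := (hint X hX).2.1
    exact (hfM p).subset (fun i hi => hi hpX)
  have hfinN : ∀ X ∈ 𝓘, {j : κ | X ⊆ JN j}.Finite := by
    intro X hX
    obtain ⟨p, hpX⟩ := (hint X hX).2.1
    exact (hfN p).subset (fun j hj => hj hpX)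
  have hrkM : ∀ X, ∀ hX : X ∈ 𝓘, M.rk X = Nat.card {i : ι | X ⊆ JM i} := by
    intro X hX
    rw [PersMod.rk_eq_of_iso EM X,
      PersMod.famSum_kMod_rk JM (fun i => (hint _ (hJM i)).1) X (hint X hX) (hfinM X hX)]
  have hrkN : ∀ X, ∀ hX : X ∈ 𝓘, N.rk X = Nat.card {j : κ | X ⊆ JN j} := by
    intro X hX
    rw [PersMod.rk_eq_of_iso EN X,
      PersMod.famSum_kMod_rk JN (fun j => (hint _ (hJN j)).1) X (hint X hX) (hfinN X hX)]
  have hcard : ∀ X ∈ 𝓘, Nat.card {i : ι | X ⊆ JM i} = Nat.card {j : κ | X ⊆ JN j} := by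
    intro X hX
    rw [← hrkM X hX, ← hrkN X hX]
    exact hrk X hX
  have hfibM : ∀ Y : Set P, {i : ι | JM i = Y}.Finite := by
    intro Y
    by_cases hY : Y ∈ 𝓘
    · exact (hfinM Y hY).subset (fun i hi => hi.symm.subset)
    · exact Set.Finite.subset Set.finite_empty (fun i hi => absurd (hi ▸ hJM i) hY)
  have hfibN : ∀ Y : Set P, {j : κ | JN j = Y}.Finite := by
    intro Y
    by_cases hY : Y ∈ 𝓘
    · exact (hfinN Y hY).subset (fun j hj => hj.symm.subset)
    · exact Set.Finite.subset Set.finite_empty (fun j hj => absurd (hj ▸ hJN j) hY)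
  have hmult := multiplicity_eq 𝓘 hpif JM JN hJM hJN hfinM hfinN hcard
  obtain ⟨g, hg⟩ := exists_reindex JM JN hmult hfibM hfibN
  have hfam : (fun i => kMod (k := k) (JM i) (hint _ (hJM i)).1)
      = fun i => kMod (k := k) (JN (g i)) (hint _ (hJN (g i))).1 :=
    funext fun i => kMod_congr (hg i).symm _ _
  exact ⟨EM.trans ((PersMod.isoOfEq (congrArg PersMod.famSum hfam)).trans
    ((PersMod.famSumReindexIso g (fun j => kMod (k := k) (JN j) (hint _ (hJN j)).1)).trans
      EN.symm))⟩
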